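/- Let u ⊆ Q be a connected subset, a, b ∈ u distinct, and W_a = {x ∈ u : d_u(x,a) ≤ d_u(x,b)}, W_b = {x ∈ u : d_u(x,b) < d_u(x,a)}. Then for all x ∈ W_a, d_{W_a}(x, a) = d_u(x, a), and for all x ∈ W_b, d_{W_b}(x, b) = d_u(x, b), i.e., shortest-path distances to the respective center are preserved when restricting to the Voronoi cell. -/

import Mathlib

open scoped ENNReal symmDiff

/-- Weight of a path (list of vertices): sum of edge weights of consecutive pairs. -/
noncomputable def pathWeight {V : Type*} (w : V → V → ℝ≥0∞) : List V → ℝ≥0∞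
  | [] => 0
  | [_] => 0
  | a :: b :: l => w a b + pathWeight w (b :: l)
termination_by l => l.length

/-- `l` is a walk from `x` to `y` inside the induced subgraph `G ∩ S`. -/
def IsWalkIn {V : Type*} (G : SimpleGraph V) (S : Set V) (x y : V) (l : List V) : Prop :=
  l.Chain' G.Adj ∧ (∀ v ∈ l, v ∈ S) ∧ l.head? = some x ∧ l.getLast? = some y

/-- Shortest-path distance between `x` and `y` in the induced subgraph `G ∩ S`
(`⊤` if there is no walk). -/
noncomputable def gdist {V : Type*} (G : SimpleGraph V) (w : V → V → ℝ≥0∞)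
    (S : Set V) (x y : V) : ℝ≥0∞ :=
  sInf (pathWeight w '' {l | IsWalkIn G S x y l})

/-- `S` is a nonempty subset inducing a connected subgraph of `G`. -/
def ConnectedIn {V : Type*} (G : SimpleGraph V) (S : Set V) : Prop :=
  S.Nonempty ∧ ∀ x ∈ S, ∀ y ∈ S, ∃ l, IsWalkIn G S x y l

/-- Two subsets are adjacent if some edge of `G` joins them. -/
def AdjSets {V : Type*} (G : SimpleGraph V) (A B : Set V) : Prop :=
  ∃ a ∈ A, ∃ b ∈ B, G.Adj a b

/-- One-center cost `H₁(h; S) = ∑_{k ∈ S} d_S(h,k) φ(k)`. -/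
noncomputable def H1 {V : Type*} [Fintype V] (G : SimpleGraph V) (w : V → V → ℝ≥0∞)
    (φ : V → ℝ≥0∞) (h : V) (S : Set V) : ℝ≥0∞ :=
  ∑ k : V, S.indicator (fun k => gdist G w S h k * φ k) k

/-- The set of minimizers of `H₁(·; S)` over `S`. -/
def argminH1 {V : Type*} [Fintype V] (G : SimpleGraph V) (w : V → V → ℝ≥0∞)
    (φ : V → ℝ≥0∞) (S : Set V) : Set V :=
  {h ∈ S | ∀ h' ∈ S, H1 G w φ h S ≤ H1 G w φ h' S}

/-- Generalized centroid: least element (total order on `V`) of the argmin of `H₁(·; S)`. -/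
noncomputable def Cd {V : Type*} [Fintype V] [LinearOrder V] [Nonempty V]
    (G : SimpleGraph V) (w : V → V → ℝ≥0∞) (φ : V → ℝ≥0∞) (S : Set V) : V :=
  if hne : ((argminH1 G w φ S).toFinite.toFinset).Nonempty then
    (argminH1 G w φ S).toFinite.toFinset.min' hne
  else Classical.arbitrary V

/-- Connected `N`-partition of the vertex set. -/
def IsConnPart {V : Type*} (G : SimpleGraph V) {N : ℕ} (p : Fin N → Set V) : Prop :=
  (⋃ i, p i) = Set.univ ∧ (∀ i j, i ≠ j → p i ∩ p j = ∅) ∧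
    (∀ i, (p i).Nonempty) ∧ (∀ i, ConnectedIn G (p i))

/-- Multicenter cost `H_multicenter(p, c) = ∑ᵢ H₁(cᵢ; pᵢ)`. -/
noncomputable def Hmc {V : Type*} [Fintype V] (G : SimpleGraph V) (w : V → V → ℝ≥0∞)
    (φ : V → ℝ≥0∞) {N : ℕ} (p : Fin N → Set V) (c : Fin N → V) : ℝ≥0∞ :=
  ∑ i, H1 G w φ (c i) (p i)

/-- `H_exp(p) = ∑ᵢ H₁(Cd(pᵢ); pᵢ)`. -/
noncomputable def Hexp {V : Type*} [Fintype V] [LinearOrder V] [Nonempty V]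
    (G : SimpleGraph V) (w : V → V → ℝ≥0∞) (φ : V → ℝ≥0∞) {N : ℕ}
    (p : Fin N → Set V) : ℝ≥0∞ :=
  ∑ i, H1 G w φ (Cd G w φ (p i)) (p i)

/-- `p` is a Voronoi partition of `Q` generated by `c` (distances `d_G` in the full graph). -/
def IsVoronoi {V : Type*} (G : SimpleGraph V) (w : V → V → ℝ≥0∞) {N : ℕ}
    (p : Fin N → Set V) (c : Fin N → V) : Prop :=
  ∀ i, c i ∈ p i ∧ ∀ k ∈ p i, ∀ j, j ≠ i →
    gdist G w Set.univ k (c i) ≤ gdist G w Set.univ k (c j)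

/-- Two-center cost `D(a,b) = ∑_{h ∈ u} min{d_u(h,a), d_u(h,b)}`. -/
noncomputable def Dtwo {V : Type*} [Fintype V] (G : SimpleGraph V) (w : V → V → ℝ≥0∞)
    (u : Set V) (a b : V) : ℝ≥0∞ :=
  ∑ h : V, u.indicator (fun h => min (gdist G w u h a) (gdist G w u h b)) h

/-- `p` is a pairwise-optimal connected `N`-partition. -/
def PairwiseOptimal {V : Type*} [Fintype V] [LinearOrder V] [Nonempty V]
    (G : SimpleGraph V) (w : V → V → ℝ≥0∞) (φ : V → ℝ≥0∞) {N : ℕ}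
    (p : Fin N → Set V) : Prop :=
  IsConnPart G p ∧ ∀ i j : Fin N, i ≠ j → AdjSets G (p i) (p j) →
    H1 G w φ (Cd G w φ (p i)) (p i) + H1 G w φ (Cd G w φ (p j)) (p j)
      = ⨅ a ∈ p i ∪ p j, ⨅ b ∈ p i ∪ p j, Dtwo G w (p i ∪ p j) a b

/-- `p` is centroidal Voronoi in pairs. -/
def CVIP {V : Type*} [Fintype V] [LinearOrder V] [Nonempty V]
    (G : SimpleGraph V) (w : V → V → ℝ≥0∞) (φ : V → ℝ≥0∞) {N : ℕ}
    (p : Fin N → Set V) : Prop :=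
  ∀ i j : Fin N, i ≠ j → AdjSets G (p i) (p j) → ∀ k ∈ p i,
    gdist G w (p i ∪ p j) k (Cd G w φ (p i)) ≤ gdist G w (p i ∪ p j) k (Cd G w φ (p j))


/-!
Finite distances are attained: cutting the closed subwalk out of a walk that visits a vertex
twice does not increase its weight, and there are only finitely many walks without repeated
vertices. If `v` lies on a shortest walk in `u` from `x` to `a`, then
`d_u(x,v) + d_u(v,a) = d_u(x,a)`; were `v` strictly closer to `b` than to `a`, the triangle
inequality would give `d_u(x,b) < d_u(x,a)`. So a shortest walk in `u` from a point of the cell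
of `a` to `a` stays in that cell, and the cell of `b` is handled in the same way with the strict
and non-strict inequalities exchanged.
-/

theorem List.exists_eq_append_cons_append_cons_of_not_nodup {α : Type*} :
    ∀ {l : List α}, ¬l.Nodup → ∃ p v q r, l = p ++ v :: (q ++ v :: r)
  | [], h => absurd List.nodup_nil h
  | a :: t, h => by
    rw [List.nodup_cons, not_and_or, not_not] at h
    rcases h with ha | ht
    · obtain ⟨q, r, rfl⟩ := List.append_of_mem ha
      exact ⟨[], a, q, r, rfl⟩
    · obtain ⟨p, v, q, r, rfl⟩ := exists_eq_append_cons_append_cons_of_not_nodup ht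
      exact ⟨a :: p, v, q, r, rfl⟩

section Walks

variable {V : Type*} {G : SimpleGraph V} {w : V → V → ℝ≥0∞} {S T : Set V} {x y v : V}

theorem pathWeight_append_cons (p m : List V) :
    pathWeight w (p ++ v :: m) = pathWeight w (p ++ [v]) + pathWeight w (v :: m) := by
  induction p using List.twoStepInduction with
  | nil => simp [pathWeight]
  | singleton a => simp [pathWeight]
  | cons_cons a b p _ ih => simp only [List.cons_append, pathWeight] at ih ⊢; rw [ih, add_assoc]

theorem isWalkIn_append_cons_iff {p m : List V} :
    IsWalkIn G S x y (p ++ v :: m) ↔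
      IsWalkIn G S x v (p ++ [v]) ∧ IsWalkIn G S v y (v :: m) := by
  have hhead : (p ++ v :: m).head? = (p ++ [v]).head? := by cases p <;> rfl
  constructor
  · rintro ⟨hc, hS, hx, hy⟩
    obtain ⟨hc₁, hc₂⟩ := List.isChain_split.mp hc
    refine ⟨⟨hc₁, fun u hu => hS u ?_, hhead ▸ hx, by simp⟩,
      ⟨hc₂, fun u hu => hS u (List.mem_append_right _ hu), rfl, by simpa using hy⟩⟩
    simp only [List.mem_append, List.mem_cons] at hu ⊢
    tauto
  · rintro ⟨⟨hc₁, hS₁, hx, -⟩, ⟨hc₂, hS₂, -, hy⟩⟩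
    refine ⟨List.isChain_split.mpr ⟨hc₁, hc₂⟩, fun u hu => ?_, hhead ▸ hx,
      by simpa using hy⟩
    rcases List.mem_append.mp hu with hu | hu
    exacts [hS₁ u (List.mem_append_left _ hu), hS₂ u hu]

theorem gdist_le_pathWeight {l : List V} (h : IsWalkIn G S x y l) :
    gdist G w S x y ≤ pathWeight w l :=
  sInf_le ⟨l, h, rfl⟩

theorem gdist_le_gdist_of_subset (hST : S ⊆ T) : gdist G w T x y ≤ gdist G w S x y :=
  sInf_le_sInf <| Set.image_mono fun _ hl => ⟨hl.1, fun v hv => hST (hl.2.1 v hv), hl.2.2⟩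

theorem gdist_add_gdist_le_pathWeight {l : List V} (hl : IsWalkIn G S x y l) (hv : v ∈ l) :
    gdist G w S x v + gdist G w S v y ≤ pathWeight w l := by
  obtain ⟨p, m, rfl⟩ := List.append_of_mem hv
  obtain ⟨hxv, hvy⟩ := isWalkIn_append_cons_iff.mp hl
  rw [pathWeight_append_cons]
  exact add_le_add (gdist_le_pathWeight hxv) (gdist_le_pathWeight hvy)

theorem gdist_triangle : gdist G w S x y ≤ gdist G w S x v + gdist G w S v y := by
  simp only [gdist, sInf_image, ENNReal.iInf_add, ENNReal.add_iInf, le_iInf_iff]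
  intro l₂ hl₂ l₁ hl₁
  obtain ⟨p, rfl⟩ := List.getLast?_eq_some_iff.mp hl₁.2.2.2
  obtain ⟨m, rfl⟩ := List.head?_eq_some_iff.mp hl₂.2.2.1
  rw [← pathWeight_append_cons]
  exact iInf₂_le _ (isWalkIn_append_cons_iff.mpr ⟨hl₁, hl₂⟩)

theorem IsWalkIn.exists_nodup_pathWeight_le {l : List V} (hl : IsWalkIn G S x y l) :
    ∃ l', IsWalkIn G S x y l' ∧ l'.Nodup ∧ pathWeight w l' ≤ pathWeight w l := by
  by_cases hnd : l.Nodup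
  · exact ⟨l, hl, hnd, le_rfl⟩
  obtain ⟨p, v, q, r, rfl⟩ := List.exists_eq_append_cons_append_cons_of_not_nodup hnd
  obtain ⟨hxv, hvy⟩ := isWalkIn_append_cons_iff.mp hl
  rw [← List.cons_append] at hvy
  obtain ⟨-, hvy⟩ := isWalkIn_append_cons_iff.mp hvy
  obtain ⟨l', hl', hnd', hle⟩ :=
    IsWalkIn.exists_nodup_pathWeight_le (isWalkIn_append_cons_iff.mpr ⟨hxv, hvy⟩)
  refine ⟨l', hl', hnd', hle.trans ?_⟩
  rw [pathWeight_append_cons p r, pathWeight_append_cons p (q ++ v :: r), ← List.cons_append,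
    pathWeight_append_cons (v :: q) r]
  exact add_le_add_right le_add_self _
termination_by l.length
decreasing_by subst_vars; simp

theorem exists_isWalkIn_pathWeight_eq_gdist [Fintype V] (h : gdist G w S x y ≠ ⊤) :
    ∃ l, IsWalkIn G S x y l ∧ pathWeight w l = gdist G w S x y := by
  obtain ⟨_, ⟨l, hl, rfl⟩, -⟩ :
      ∃ d ∈ pathWeight w '' {l | IsWalkIn G S x y l}, d ≠ ⊤ := by
    by_contra! hall
    exact h (sInf_eq_top.mpr hall)
  have hfin : {l | IsWalkIn G S x y l ∧ l.Nodup}.Finite :=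
    (List.finite_length_le V (Fintype.card V)).subset fun l hl => hl.2.length_le_card
  obtain ⟨l₀, ⟨hl₀, -⟩, hmin⟩ := Set.exists_min_image _ (pathWeight w) hfin <|
    let ⟨l', hl', hnd, _⟩ := hl.exists_nodup_pathWeight_le (w := w); ⟨l', hl', hnd⟩
  refine ⟨l₀, hl₀, le_antisymm (le_sInf ?_) (gdist_le_pathWeight hl₀)⟩
  rintro _ ⟨l, hl, rfl⟩
  obtain ⟨l', hl', hnd, hle⟩ := IsWalkIn.exists_nodup_pathWeight_le (w := w) hl
  exact (hmin l' ⟨hl', hnd⟩).trans hle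

theorem gdist_eq_of_subset_of_between_mem [Fintype V] {W : Set V} (hWS : W ⊆ S)
    (hW : ∀ v ∈ S, gdist G w S x y ≠ ⊤ →
      gdist G w S x v + gdist G w S v y ≤ gdist G w S x y → v ∈ W) :
    gdist G w W x y = gdist G w S x y := by
  refine le_antisymm ?_ (gdist_le_gdist_of_subset hWS)
  by_cases htop : gdist G w S x y = ⊤
  · exact htop ▸ le_top
  obtain ⟨l, hl, hlS⟩ := exists_isWalkIn_pathWeight_eq_gdist htop
  have hlW : IsWalkIn G W x y l := ⟨hl.1, fun v hv =>
    hW v (hl.2.1 v hv) htop (hlS ▸ gdist_add_gdist_le_pathWeight hl hv), hl.2.2⟩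
  exact hlS ▸ gdist_le_pathWeight hlW

theorem gdist_le_gdist_of_between {a b : V} (hx : gdist G w S x a ≤ gdist G w S x b)
    (hfin : gdist G w S x a ≠ ⊤) (hv : gdist G w S x v + gdist G w S v a ≤ gdist G w S x a) :
    gdist G w S v a ≤ gdist G w S v b := by
  by_contra! hlt
  have hxv : gdist G w S x v ≠ ⊤ := ne_top_of_le_ne_top hfin (le_self_add.trans hv)
  refine lt_irrefl (gdist G w S x b) ?_
  calc gdist G w S x b ≤ gdist G w S x v + gdist G w S v b := gdist_triangle
    _ < gdist G w S x v + gdist G w S v a := ENNReal.add_lt_add_left hxv hlt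
    _ ≤ gdist G w S x b := hv.trans hx

theorem gdist_lt_gdist_of_between {a b : V} (hx : gdist G w S x b < gdist G w S x a)
    (hv : gdist G w S x v + gdist G w S v b ≤ gdist G w S x b) :
    gdist G w S v b < gdist G w S v a := by
  by_contra! hle
  refine lt_irrefl (gdist G w S x a) ?_
  calc gdist G w S x a ≤ gdist G w S x v + gdist G w S v a := gdist_triangle
    _ ≤ gdist G w S x v + gdist G w S v b := add_le_add_right hle _
    _ < gdist G w S x a := hv.trans_lt hx

end Walks

variable {V : Type*} [Fintype V] [LinearOrder V] [Nonempty V]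

theorem dist_preserved_in_cell_general (G : SimpleGraph V) (w : V → V → ℝ≥0∞)
    (u : Set V) (a b : V) :
    (∀ x ∈ {x ∈ u | gdist G w u x a ≤ gdist G w u x b},
      gdist G w {x ∈ u | gdist G w u x a ≤ gdist G w u x b} x a = gdist G w u x a) ∧
    (∀ x ∈ {x ∈ u | gdist G w u x b < gdist G w u x a},
      gdist G w {x ∈ u | gdist G w u x b < gdist G w u x a} x b = gdist G w u x b) := by
  constructor
  · rintro x ⟨-, hx⟩
    exact gdist_eq_of_subset_of_between_mem (fun _ hv => hv.1) fun v hv hfin hxv =>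
      ⟨hv, gdist_le_gdist_of_between hx hfin hxv⟩
  · rintro x ⟨-, hx⟩
    exact gdist_eq_of_subset_of_between_mem (fun _ hv => hv.1) fun v hv _ hxv =>
      ⟨hv, gdist_lt_gdist_of_between hx hxv⟩

theorem dist_preserved_in_cell (G : SimpleGraph V) (w : V → V → ℝ≥0∞)
    (hw : ∀ a b, G.Adj a b → 0 < w a b ∧ w a b ≠ ⊤) (hwsymm : ∀ a b, w a b = w b a)
    (u : Set V) (hu : ConnectedIn G u) (a b : V) (ha : a ∈ u) (hb : b ∈ u) (hab : a ≠ b) :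
    (∀ x ∈ {x ∈ u | gdist G w u x a ≤ gdist G w u x b},
      gdist G w {x ∈ u | gdist G w u x a ≤ gdist G w u x b} x a = gdist G w u x a) ∧
    (∀ x ∈ {x ∈ u | gdist G w u x b < gdist G w u x a},
      gdist G w {x ∈ u | gdist G w u x b < gdist G w u x a} x b = gdist G w u x b) :=
  dist_preserved_in_cell_general G w u a b
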